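/- arXiv:2510.12466 — 4 statements merged into one kernel-verified Lean document; each statement's English description precedes it below -/
import Mathlib

section
/- (Cycle inequality, Odijk) Let γ be an oriented cycle in a directed graph with arc set A, decomposed into forward arcs γ⁺ and backward arcs γ⁻, let T > 0, l, u ∈ ℤ^A with l ≤ u, and let x ∈ ℤ^A be an integral periodic tension with l ≤ x ≤ u and γᵀx ≡ 0 (mod T). Then ⌈(γ⁺ᵀl - γ⁻ᵀu)/T⌉ ≤ γᵀx / T ≤ ⌊(γ⁺ᵀu - γ⁻ᵀl)/T⌋. -/
/-- Cycle inequality, Odijk: For an oriented cycle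
`γ = γ⁺ - γ⁻` with `γ⁺, γ⁻ ∈ {0,1}^A` of disjoint supports, period `T > 0`,
bounds `l ≤ u`, and an integral periodic tension `x` with `l ≤ x ≤ u` and
`T ∣ γᵀx`, the integer `γᵀx / T` satisfies
`⌈(γ⁺ᵀl - γ⁻ᵀu)/T⌉ ≤ γᵀx/T ≤ ⌊(γ⁺ᵀu - γ⁻ᵀl)/T⌋`. -/
theorem odijk_cycle_inequality {A : Type*} [Fintype A]
    (T : ℤ) (hT : 0 < T) (γp γn : A → ℤ)
    (hγp : ∀ a, γp a = 0 ∨ γp a = 1) (hγn : ∀ a, γn a = 0 ∨ γn a = 1)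
    (hdisj : ∀ a, γp a = 0 ∨ γn a = 0)
    (l u x : A → ℤ) (hlu : ∀ a, l a ≤ u a)
    (hlx : ∀ a, l a ≤ x a) (hxu : ∀ a, x a ≤ u a)
    (hdiv : T ∣ ∑ a, (γp a - γn a) * x a) :
    ⌈(((∑ a, γp a * l a) - ∑ a, γn a * u a : ℤ) : ℚ) / (T : ℚ)⌉
      ≤ (∑ a, (γp a - γn a) * x a) / T ∧
    (∑ a, (γp a - γn a) * x a) / T
      ≤ ⌊(((∑ a, γp a * u a) - ∑ a, γn a * l a : ℤ) : ℚ) / (T : ℚ)⌋ := by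
  obtain ⟨k, hk⟩ := hdiv
  have hT0 : T ≠ 0 := hT.ne'
  have hdivk : (∑ a, (γp a - γn a) * x a) / T = k := by
    rw [hk, Int.mul_ediv_cancel_left _ hT0]
  have hlow : (∑ a, γp a * l a) - ∑ a, γn a * u a ≤ ∑ a, (γp a - γn a) * x a := by
    rw [← Finset.sum_sub_distrib]
    apply Finset.sum_le_sum
    intro a _
    rcases hγp a with hp | hp <;> rcases hγn a with hn | hn <;>
      simp [hp, hn] <;> first
        | exact hlx a | exact hxu a
        | { rcases hdisj a with h | h <;> simp_all }
  have hupp : ∑ a, (γp a - γn a) * x a ≤ (∑ a, γp a * u a) - ∑ a, γn a * l a := by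
    rw [← Finset.sum_sub_distrib]
    apply Finset.sum_le_sum
    intro a _
    rcases hγp a with hp | hp <;> rcases hγn a with hn | hn <;>
      simp [hp, hn] <;> first
        | exact hlx a | exact hxu a
        | { rcases hdisj a with h | h <;> simp_all }
  rw [hdivk]
  have hTQ : (0 : ℚ) < (T : ℚ) := by exact_mod_cast hT
  constructor
  · rw [Int.ceil_le, div_le_iff₀ hTQ]
    have : (∑ a, γp a * l a) - ∑ a, γn a * u a ≤ k * T := by
      rw [mul_comm, ← hk]; exact hlow
    exact_mod_cast this
  · rw [Int.le_floor, le_div_iff₀ hTQ]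
    have : k * T ≤ (∑ a, γp a * u a) - ∑ a, γn a * l a := by
      rw [mul_comm, ← hk]; exact hupp
    exact_mod_cast this
end

section
/- (Change-cycle inequality, Nachtigall) Let γ ∈ {-1,0,1}^A be an oriented cycle with positive part γ⁺ and negative part γ⁻, T > 0, l ∈ ℤ^A, and let x ∈ ℤ^A satisfy l ≤ x and γᵀx ≡ 0 (mod T). Set ξ := (-γᵀl) mod T ∈ {0,…,T-1}. Then (T - ξ)·γ⁺ᵀ(x - l) + ξ·γ⁻ᵀ(x - l) ≥ ξ·(T - ξ). -/
/-- Change-cycle inequality, Nachtigall: for an oriented cycle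
`γ ∈ {-1,0,1}^A`, `T > 0`, lower bounds `l`, and `x ≥ l` integral with
`T ∣ γᵀx`, setting `ξ := (-γᵀl) mod T`, we have
`(T - ξ)·γ⁺ᵀ(x - l) + ξ·γ⁻ᵀ(x - l) ≥ ξ·(T - ξ)`. -/
theorem nachtigall_change_cycle_inequality {A : Type*} [Fintype A]
    [DecidableEq A] (T : ℤ) (hT : 0 < T) (γ : A → ℤ)
    (hγ : ∀ a, γ a = -1 ∨ γ a = 0 ∨ γ a = 1)
    (l x : A → ℤ) (hlx : ∀ a, l a ≤ x a)
    (hdiv : T ∣ ∑ a, γ a * x a) :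
    (T - (-(∑ a, γ a * l a)) % T) *
        (∑ a ∈ Finset.univ.filter (fun a => γ a = 1), (x a - l a)) +
      ((-(∑ a, γ a * l a)) % T) *
        (∑ a ∈ Finset.univ.filter (fun a => γ a = -1), (x a - l a))
      ≥ ((-(∑ a, γ a * l a)) % T) * (T - (-(∑ a, γ a * l a)) % T) := by
  set ξ : ℤ := (-(∑ a, γ a * l a)) % T with hξ
  set P : ℤ := ∑ a ∈ Finset.univ.filter (fun a => γ a = 1), (x a - l a) with hP
  set N : ℤ := ∑ a ∈ Finset.univ.filter (fun a => γ a = -1), (x a - l a) with hN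
  have hP0 : 0 ≤ P := Finset.sum_nonneg fun a _ => by linarith [hlx a]
  have hN0 : 0 ≤ N := Finset.sum_nonneg fun a _ => by linarith [hlx a]
  have hξ0 : 0 ≤ ξ := Int.emod_nonneg _ (ne_of_gt hT)
  have hξT : ξ < T := Int.emod_lt_of_pos _ hT
  have hsplit : ∑ a, γ a * (x a - l a) = P - N := by
    calc ∑ a, γ a * (x a - l a)
        = ∑ a, ((if γ a = 1 then (x a - l a) else 0)
            - (if γ a = -1 then (x a - l a) else 0)) := by
          apply Finset.sum_congr rfl
          intro a _
          rcases hγ a with h | h | h <;> simp [h]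
      _ = P - N := by
          rw [Finset.sum_sub_distrib, ← Finset.sum_filter, ← Finset.sum_filter]
  obtain ⟨m, hm⟩ := hdiv
  have hdvd : T ∣ (P - N - ξ) := by
    refine ⟨m + (-(∑ a, γ a * l a)) / T, ?_⟩
    have hsum : ∑ a, γ a * (x a - l a) = (∑ a, γ a * x a) - ∑ a, γ a * l a := by
      rw [← Finset.sum_sub_distrib]
      exact Finset.sum_congr rfl fun a _ => by ring
    have hmod := Int.emod_def (-(∑ a, γ a * l a)) T
    rw [← hsplit, hsum, hm, hξ, hmod]; ring
  obtain ⟨k, hk⟩ := hdvd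
  have hPN : P - N = ξ + T * k := by linarith
  rcases le_or_gt 0 k with hk0 | hk0
  · nlinarith [mul_nonneg hT.le hN0,
      mul_nonneg (mul_nonneg hT.le hk0) (by linarith : (0:ℤ) ≤ T - ξ)]
  · have hk1 : k ≤ -1 := by linarith
    nlinarith [mul_nonneg hT.le hP0,
      mul_nonneg hξ0 (by nlinarith : (0:ℤ) ≤ -T * k - T)]
end

section
/- Let φ be the linear map sending a cycle-indexed nonnegative vector x ∈ ℚ^C to the arc-indexed vector x̄ ∈ ℚ^A with x̄_a = Σ_{c ∈ C : a ∈ c} x_c. If Σ_{c ∈ C_L} x_c = 1 for a partition C = ⊔_L C_L into cycles of lines, and every cycle c ∈ C_L contains exactly one arc from each arc class 𝒜(α) of line L, then x̄ satisfies: (i) Σ_{a ∈ 𝒜(α)} x̄_a = 1 for every activity α of line L, and (ii) flow conservation Σ_{a ∈ δ⁻(v)} x̄_a = Σ_{a ∈ δ⁺(v)} x̄_a at every node v. -/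
/-- The linear map `x ↦ x̄` with `x̄_a = Σ_{c ∋ a} x_c` maps a
vector satisfying the cycle partition constraints (one unit per line, each
cycle of a line containing exactly one arc of each arc class of the line and
no arcs of classes of other lines, and equal in/out incidence at each node)
to a vector satisfying (i) `Σ_{a ∈ 𝒜(α)} x̄_a = 1` for each activity `α`
and (ii) flow conservation at every node. -/
theorem cycle_projection_satisfies_arc_constraints
    {Cycle Line Act Arc Node : Type*}
    [Fintype Cycle] [Fintype Arc] [DecidableEq Arc]
    [DecidableEq Line] [DecidableEq Node]
    (line : Cycle → Line) (arcs : Cycle → Finset Arc)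
    (actline : Act → Line) (𝒜 : Act → Finset Arc)
    (tail head : Arc → Node)
    (x : Cycle → ℚ)
    (hpart : ∀ L : Line, ∑ c ∈ Finset.univ.filter (fun c => line c = L), x c = 1)
    (hone : ∀ (c : Cycle) (α : Act), line c = actline α →
      (arcs c ∩ 𝒜 α).card = 1)
    (hnone : ∀ (c : Cycle) (α : Act), line c ≠ actline α →
      arcs c ∩ 𝒜 α = ∅)
    (hflow : ∀ (c : Cycle) (v : Node),
      ((arcs c).filter (fun a => head a = v)).card
        = ((arcs c).filter (fun a => tail a = v)).card) :
    (∀ α : Act,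
      ∑ a ∈ 𝒜 α, (∑ c ∈ Finset.univ.filter (fun c => a ∈ arcs c), x c) = 1) ∧
    (∀ v : Node,
      ∑ a ∈ Finset.univ.filter (fun a => head a = v),
          (∑ c ∈ Finset.univ.filter (fun c => a ∈ arcs c), x c)
        = ∑ a ∈ Finset.univ.filter (fun a => tail a = v),
            (∑ c ∈ Finset.univ.filter (fun c => a ∈ arcs c), x c)) := by
  classical
  have key : ∀ s : Finset Arc,
      (∑ a ∈ s, ∑ c ∈ Finset.univ.filter (fun c => a ∈ arcs c), x c)
        = ∑ c : Cycle, ((s ∩ arcs c).card : ℚ) * x c := by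
    intro s
    calc (∑ a ∈ s, ∑ c ∈ Finset.univ.filter (fun c => a ∈ arcs c), x c)
        = ∑ a ∈ s, ∑ c : Cycle, if a ∈ arcs c then x c else 0 := by
          simp [Finset.sum_filter]
      _ = ∑ c : Cycle, ∑ a ∈ s, if a ∈ arcs c then x c else 0 := Finset.sum_comm
      _ = ∑ c : Cycle, ((s ∩ arcs c).card : ℚ) * x c := by
          refine Finset.sum_congr rfl fun c _ => ?_
          rw [← Finset.sum_filter, Finset.sum_const, nsmul_eq_mul,
            Finset.filter_mem_eq_inter]
  constructor
  · intro α
    rw [key]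
    have : ∀ c : Cycle, ((𝒜 α ∩ arcs c).card : ℚ) * x c
        = if line c = actline α then x c else 0 := by
      intro c
      rw [Finset.inter_comm]
      by_cases h : line c = actline α
      · simp [h, hone c α h]
      · simp [h, hnone c α h]
    rw [Finset.sum_congr rfl fun c _ => this c, ← Finset.sum_filter, hpart]
  · intro v
    rw [key, key]
    refine Finset.sum_congr rfl fun c _ => ?_
    have h1 : Finset.univ.filter (fun a => head a = v) ∩ arcs c
        = (arcs c).filter (fun a => head a = v) := by
      ext a; simp [and_comm]
    have h2 : Finset.univ.filter (fun a => tail a = v) ∩ arcs c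
        = (arcs c).filter (fun a => tail a = v) := by
      ext a; simp [and_comm]
    rw [h1, h2, hflow]
end

section
/- (LP relaxation comparison of cXPESP and cXPESP^w) Every feasible fractional solution of the cXPESP LP relaxation can be mapped, preserving the objective value, to a feasible fractional solution of the cXPESP^w LP relaxation, by replacing each unit of flow on an expanded transfer arc (v[t], w[t']) of duration τ by flow on the path consisting of the arc (v[t], w[t + l]) followed by τ - l waiting arcs (w[s], w[s+1 mod T]). Consequently the optimal LP value of cXPESP is at least that of cXPESP^w. -/
/-- Duration of the expanded transfer arc `(v[t], w[t'])` for a transfer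
activity with lower bound `l` and period `T`. -/
def transferDuration (T l : ℤ) (t t' : ℕ) : ℤ :=
  ((t' : ℤ) - (t : ℤ) - l) % T + l

/-- The flow placed on the waiting arc `(w[s], w[s+1])` when each unit of flow
on an expanded transfer arc `(v[t], w[t'])` of duration `τ` is rerouted along
the reduced transfer arc `(v[t], w[(t+l) mod T])` followed by `τ - l` waiting
arcs. -/
def waitingFlow (T : ℕ) (l : ℤ) (z : ℕ → ℕ → ℚ) (s : ℕ) : ℚ :=
  ∑ t ∈ Finset.range T, ∑ t' ∈ Finset.range T,
    (if ((s : ℤ) - (t : ℤ) - l) % (T : ℤ) < transferDuration T l t t' - l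
      then z t t' else 0)


lemma my_sub_emod_zero_iff {T : ℕ} (hT : 0 < T) {x y : ℤ}
    (hx0 : 0 ≤ x) (hxT : x < T) (hy0 : 0 ≤ y) (hyT : y < T) :
    (x - y) % (T : ℤ) = 0 ↔ x = y := by
  constructor
  · intro h
    have hd : (T : ℤ) ∣ (x - y) := Int.dvd_of_emod_eq_zero h
    have := Int.eq_zero_of_abs_lt_dvd hd (by rw [abs_lt]; omega)
    omega
  · intro h; simp [h]

lemma my_shift_sum (T : ℕ) (hT : 0 < T) (c : ℤ) (f : ℤ → ℚ) :
    ∑ s ∈ Finset.range T, f (((s : ℤ) - c) % (T : ℤ))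
      = ∑ s ∈ Finset.range T, f (s : ℤ) := by
  have hT' : (0 : ℤ) < T := by exact_mod_cast hT
  have hne : (T : ℤ) ≠ 0 := by omega
  refine Finset.sum_nbij' (i := fun s => (((s : ℤ) - c) % (T : ℤ)).toNat)
    (j := fun s => (((s : ℤ) + c) % (T : ℤ)).toNat) ?_ ?_ ?_ ?_ ?_
  · intro a _
    have h0 := Int.emod_nonneg ((a : ℤ) - c) hne
    have h1 := Int.emod_lt_of_pos ((a : ℤ) - c) hT'
    simp only [Finset.mem_range]; omega
  · intro a _
    have h0 := Int.emod_nonneg ((a : ℤ) + c) hne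
    have h1 := Int.emod_lt_of_pos ((a : ℤ) + c) hT'
    simp only [Finset.mem_range]; omega
  · intro a ha
    simp only [Finset.mem_range] at ha
    have h0 := Int.emod_nonneg ((a : ℤ) - c) hne
    have hcast : ((((a : ℤ) - c) % (T : ℤ)).toNat : ℤ) = ((a : ℤ) - c) % (T : ℤ) :=
      Int.toNat_of_nonneg h0
    have hme : (((((a : ℤ) - c) % (T : ℤ)).toNat : ℤ) + c) % (T : ℤ) = (a : ℤ) % (T : ℤ) := by
      have : ((((a : ℤ) - c) % (T : ℤ)).toNat : ℤ) + c ≡ (a : ℤ) [ZMOD (T : ℤ)] := by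
        rw [hcast]
        calc ((a : ℤ) - c) % (T : ℤ) + c ≡ ((a : ℤ) - c) + c [ZMOD (T : ℤ)] :=
              Int.ModEq.add_right c (Int.emod_emod_of_dvd _ dvd_rfl)
          _ = (a : ℤ) := by ring
      exact this
    have h3 : (a : ℤ) % (T : ℤ) = a := Int.emod_eq_of_lt (by omega) (by omega)
    beta_reduce
    omega
  · intro a ha
    simp only [Finset.mem_range] at ha
    have h0 := Int.emod_nonneg ((a : ℤ) + c) hne
    have hcast : ((((a : ℤ) + c) % (T : ℤ)).toNat : ℤ) = ((a : ℤ) + c) % (T : ℤ) :=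
      Int.toNat_of_nonneg h0
    have hme : (((((a : ℤ) + c) % (T : ℤ)).toNat : ℤ) - c) % (T : ℤ) = (a : ℤ) % (T : ℤ) := by
      have : ((((a : ℤ) + c) % (T : ℤ)).toNat : ℤ) - c ≡ (a : ℤ) [ZMOD (T : ℤ)] := by
        rw [hcast]
        calc ((a : ℤ) + c) % (T : ℤ) - c ≡ ((a : ℤ) + c) - c [ZMOD (T : ℤ)] :=
              Int.ModEq.sub_right c (Int.emod_emod_of_dvd _ dvd_rfl)
          _ = (a : ℤ) := by ring
      exact this
    have h3 : (a : ℤ) % (T : ℤ) = a := Int.emod_eq_of_lt (by omega) (by omega)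
    beta_reduce
    omega
  · intro a _
    congr 1
    exact (Int.toNat_of_nonneg (Int.emod_nonneg _ hne)).symm

lemma my_count_sum (T : ℕ) (m : ℤ) (hm0 : 0 ≤ m) (hmT : m < T) (c : ℚ) :
    ∑ s ∈ Finset.range T, (if (s : ℤ) < m then c else 0) = (m : ℚ) * c := by
  have h1 : ∀ s : ℕ, ((s : ℤ) < m) = (s < m.toNat) := fun s => propext (by omega)
  simp only [h1]
  have hsub : Finset.range m.toNat ⊆ Finset.range T := by
    apply Finset.range_subset_range.mpr; omega
  rw [← Finset.sum_subset hsub (fun x _ hx => by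
    rw [if_neg]; simpa [Finset.mem_range] using hx)]
  rw [Finset.sum_congr rfl (fun x hx => if_pos (Finset.mem_range.mp hx)),
    Finset.sum_const, Finset.card_range, nsmul_eq_mul]
  have h2 : ((m.toNat : ℚ)) = (m : ℚ) := by exact_mod_cast Int.toNat_of_nonneg hm0
  rw [h2]

lemma my_waiting_total (T : ℕ) (hT : 0 < T) (l : ℤ) (z : ℕ → ℕ → ℚ) :
    ∑ s ∈ Finset.range T, waitingFlow T l z s
      = ∑ t ∈ Finset.range T, ∑ t' ∈ Finset.range T,
          ((transferDuration T l t t' - l : ℤ) : ℚ) * z t t' := by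
  have hT' : (0 : ℤ) < T := by exact_mod_cast hT
  unfold waitingFlow
  rw [Finset.sum_comm]
  refine Finset.sum_congr rfl fun t _ => ?_
  rw [Finset.sum_comm]
  refine Finset.sum_congr rfl fun t' _ => ?_
  have hm0 : 0 ≤ transferDuration T l t t' - l := by
    unfold transferDuration
    have := Int.emod_nonneg ((t' : ℤ) - t - l) (by omega : (T : ℤ) ≠ 0)
    omega
  have hmT : transferDuration T l t t' - l < T := by
    unfold transferDuration
    have := Int.emod_lt_of_pos ((t' : ℤ) - t - l) hT'
    omega
  have key := my_shift_sum T hT ((t : ℤ) + l)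
    (fun x => if x < transferDuration T l t t' - l then z t t' else 0)
  simp only [sub_sub] at key ⊢
  rw [key, my_count_sum T _ hm0 hmT]

lemma my_key_term (T : ℕ) (hT : 0 < T) (l : ℤ) (s t t' : ℕ)
    (hs : s < T) (ht : t < T) (ht' : t' < T) (c : ℚ) :
    (if t = (((s : ℤ) - l) % (T : ℤ)).toNat then c else 0)
      + (if (((((s : ℤ) - 1) % (T : ℤ)).toNat : ℤ) - t - l) % (T : ℤ)
            < transferDuration (T : ℤ) l t t' - l then c else 0)
    = (if ((s : ℤ) - t - l) % (T : ℤ) < transferDuration (T : ℤ) l t t' - l then c else 0)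
      + (if t' = s then c else 0) := by
  have hT' : (0 : ℤ) < T := by exact_mod_cast hT
  have hne : (T : ℤ) ≠ 0 := by omega
  set a := ((s : ℤ) - t - l) % (T : ℤ) with ha
  set m := ((t' : ℤ) - t - l) % (T : ℤ) with hm
  have hmdef : transferDuration (T : ℤ) l t t' - l = m := by
    simp [transferDuration, hm]
  have ha0 : 0 ≤ a := ha ▸ Int.emod_nonneg _ hne
  have haT : a < T := ha ▸ Int.emod_lt_of_pos _ hT'
  have hm0 : 0 ≤ m := hm ▸ Int.emod_nonneg _ hne
  have hmT : m < T := hm ▸ Int.emod_lt_of_pos _ hT'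
  -- p := previous node index
  have hp : ((((s : ℤ) - 1) % (T : ℤ)).toNat : ℤ) = ((s : ℤ) - 1) % (T : ℤ) :=
    Int.toNat_of_nonneg (Int.emod_nonneg _ hne)
  have ha' : (((((s : ℤ) - 1) % (T : ℤ)).toNat : ℤ) - t - l) % (T : ℤ)
      = (a - 1) % (T : ℤ) := by
    have h1 : ((((s : ℤ) - 1) % (T : ℤ)).toNat : ℤ) ≡ (s : ℤ) - 1 [ZMOD (T : ℤ)] := by
      rw [hp]; exact Int.emod_emod_of_dvd _ dvd_rfl
    have h2 : (s : ℤ) - (t : ℤ) - l ≡ a [ZMOD (T : ℤ)] :=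
      (Int.emod_emod_of_dvd ((s : ℤ) - (t : ℤ) - l) (dvd_refl (T : ℤ))).symm
    have : ((((s : ℤ) - 1) % (T : ℤ)).toNat : ℤ) - t - l ≡ a - 1 [ZMOD (T : ℤ)] := by
      calc ((((s : ℤ) - 1) % (T : ℤ)).toNat : ℤ) - t - l
          ≡ ((s : ℤ) - 1) - t - l [ZMOD (T : ℤ)] := (h1.sub_right _).sub_right _
        _ = ((s : ℤ) - t - l) - 1 := by ring
        _ ≡ a - 1 [ZMOD (T : ℤ)] := h2.sub_right 1
    exact this
  -- t = ts ↔ a = 0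
  have iff1 : (t = (((s : ℤ) - l) % (T : ℤ)).toNat) ↔ a = 0 := by
    have hr : ((((s : ℤ) - l) % (T : ℤ)).toNat : ℤ) = ((s : ℤ) - l) % (T : ℤ) :=
      Int.toNat_of_nonneg (Int.emod_nonneg _ hne)
    have hr0 : 0 ≤ ((s : ℤ) - l) % (T : ℤ) := Int.emod_nonneg _ hne
    have hrT : ((s : ℤ) - l) % (T : ℤ) < T := Int.emod_lt_of_pos _ hT'
    have step : a = (((s : ℤ) - l) % (T : ℤ) - (t : ℤ)) % (T : ℤ) := by
      have h1 : ((s : ℤ) - l) % (T : ℤ) ≡ (s : ℤ) - l [ZMOD (T : ℤ)] :=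
        Int.emod_emod_of_dvd _ dvd_rfl
      have : (s : ℤ) - t - l ≡ ((s : ℤ) - l) % (T : ℤ) - (t : ℤ) [ZMOD (T : ℤ)] := by
        calc (s : ℤ) - t - l = ((s : ℤ) - l) - (t : ℤ) := by ring
          _ ≡ ((s : ℤ) - l) % (T : ℤ) - (t : ℤ) [ZMOD (T : ℤ)] := h1.symm.sub_right _
      exact this
    rw [step, my_sub_emod_zero_iff hT hr0 hrT (by omega) (by omega)]
    omega
  -- t' = s ↔ a = m
  have iff2 : (t' = s) ↔ a = m := by
    rw [ha, hm, Int.emod_eq_emod_iff_emod_sub_eq_zero]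
    have e : (s : ℤ) - t - l - ((t' : ℤ) - t - l) = (s : ℤ) - t' := by ring
    rw [e, my_sub_emod_zero_iff hT (by omega) (by omega) (by omega) (by omega)]
    omega
  clear_value a m
  rw [hmdef, ha']
  by_cases haz : a = 0
  · have hneg : (a - 1) % (T : ℤ) = (T : ℤ) - 1 := by
      rw [haz]
      rw [show (0 : ℤ) - 1 = ((T : ℤ) - 1) + (T : ℤ) * (-1) by ring,
        Int.add_mul_emod_self_left, Int.emod_eq_of_lt (by omega) (by omega)]
    rw [hneg, if_pos (iff1.mpr haz)]
    simp only [iff2, haz]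
    clear ha hm hp ha' hmdef iff1 iff2 hneg
    split_ifs <;> first | ring1 | (exfalso; omega)
  · have hprev : (a - 1) % (T : ℤ) = a - 1 := Int.emod_eq_of_lt (by omega) (by omega)
    rw [hprev, if_neg (fun h => haz (iff1.mp h))]
    simp only [iff2]
    clear ha hm hp ha' hmdef iff1 iff2 hprev
    split_ifs <;> first | ring1 | (exfalso; omega)

/-- LP relaxation comparison of cXPESP and cXPESP^w:
rerouting the fractional flow `z` on the expanded transfer arcs of a transfer
activity with bounds `[l, u]` onto the reduced transfer arcs plus waiting arcs
of the cXPESP^w network (i) conserves flow at each expanded departure node,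
(ii) keeps the total waiting within `(u - l)` times the total transfer flow,
and (iii) preserves the objective value:
`Σ τ(t,t')·z(t,t') = l·Σ z + Σ_s zw(s)`.  Hence the optimal LP value of
cXPESP is at least that of cXPESP^w. -/
theorem cxpesp_to_cxpespw_flow_rerouting
    (T : ℕ) (hT : 0 < T) (l u : ℤ) (hlu : l ≤ u)
    (z : ℕ → ℕ → ℚ) (hz : ∀ t t', 0 ≤ z t t')
    (hsupp : ∀ t ∈ Finset.range T, ∀ t' ∈ Finset.range T,
      z t t' ≠ 0 → transferDuration T l t t' ≤ u) :
    (∀ s ∈ Finset.range T,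
      (∑ t' ∈ Finset.range T, z ((((s : ℤ) - l) % (T : ℤ)).toNat) t') +
          waitingFlow T l z ((((s : ℤ) - 1) % (T : ℤ)).toNat)
        = waitingFlow T l z s + ∑ t ∈ Finset.range T, z t s) ∧
    (∑ s ∈ Finset.range T, waitingFlow T l z s
        ≤ ((u - l : ℤ) : ℚ) *
            ∑ t ∈ Finset.range T, ∑ t' ∈ Finset.range T, z t t') ∧
    (∑ t ∈ Finset.range T, ∑ t' ∈ Finset.range T,
        ((transferDuration T l t t' : ℚ)) * z t t'
      = (l : ℚ) * (∑ t ∈ Finset.range T, ∑ t' ∈ Finset.range T, z t t')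
        + ∑ s ∈ Finset.range T, waitingFlow T l z s) := by
  have hT' : (0 : ℤ) < T := by exact_mod_cast hT
  have hne : (T : ℤ) ≠ 0 := by omega
  refine ⟨?_, ?_, ?_⟩
  · intro s hs
    rw [Finset.mem_range] at hs
    have hts : (((s : ℤ) - l) % (T : ℤ)).toNat ∈ Finset.range T := by
      have h0 := Int.emod_nonneg ((s : ℤ) - l) hne
      have h1 := Int.emod_lt_of_pos ((s : ℤ) - l) hT'
      simp only [Finset.mem_range]; omega
    have e1 : (∑ t' ∈ Finset.range T, z ((((s : ℤ) - l) % (T : ℤ)).toNat) t')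
        = ∑ t ∈ Finset.range T, ∑ t' ∈ Finset.range T,
            (if t = (((s : ℤ) - l) % (T : ℤ)).toNat then z t t' else 0) := by
      symm
      calc ∑ t ∈ Finset.range T, ∑ t' ∈ Finset.range T,
            (if t = (((s : ℤ) - l) % (T : ℤ)).toNat then z t t' else 0)
          = ∑ t ∈ Finset.range T,
              (if t = (((s : ℤ) - l) % (T : ℤ)).toNat
                then ∑ t' ∈ Finset.range T, z t t' else 0) :=
            Finset.sum_congr rfl fun t _ => by split <;> simp
        _ = ∑ t' ∈ Finset.range T, z ((((s : ℤ) - l) % (T : ℤ)).toNat) t' := by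
            rw [Finset.sum_ite_eq' (Finset.range T) ((((s : ℤ) - l) % (T : ℤ)).toNat)
              (fun t => ∑ t' ∈ Finset.range T, z t t'), if_pos hts]
    have e2 : (∑ t ∈ Finset.range T, z t s)
        = ∑ t ∈ Finset.range T, ∑ t' ∈ Finset.range T,
            (if t' = s then z t t' else 0) :=
      Finset.sum_congr rfl fun t _ => by
        rw [Finset.sum_ite_eq' (Finset.range T) s (z t),
          if_pos (Finset.mem_range.mpr hs)]
    rw [e1, e2]
    unfold waitingFlow
    simp only [← Finset.sum_add_distrib]
    refine Finset.sum_congr rfl fun t ht => Finset.sum_congr rfl fun t' ht' => ?_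
    exact my_key_term T hT l s t t' hs (Finset.mem_range.mp ht)
      (Finset.mem_range.mp ht') (z t t')
  · rw [my_waiting_total T hT l z, Finset.mul_sum]
    refine Finset.sum_le_sum fun t ht => ?_
    rw [Finset.mul_sum]
    refine Finset.sum_le_sum fun t' ht' => ?_
    by_cases hz0 : z t t' = 0
    · rw [hz0]; simp
    · have hτ := hsupp t ht t' ht' hz0
      have hle : ((transferDuration (T : ℤ) l t t' - l : ℤ) : ℚ) ≤ ((u - l : ℤ) : ℚ) := by
        exact_mod_cast (by omega : transferDuration (T : ℤ) l t t' - l ≤ u - l)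
      exact mul_le_mul_of_nonneg_right hle (hz t t')
  · rw [my_waiting_total T hT l z]
    simp only [Finset.mul_sum, ← Finset.sum_add_distrib]
    refine Finset.sum_congr rfl fun t _ => Finset.sum_congr rfl fun t' _ => ?_
    push_cast
    ring
end
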